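/- With the matrices A_n, B_n and polynomials Q_n defined as in the context, for every n ≥ 1 and all real λ, μ, ν one has the renormalization identity Q_{n+1}(λ, μ, ν) = Q_n(λ² + 2λν − 2μ², λν + 2ν², −μ²); that is, Q_{n+1} = Q_n ∘ F for the polynomial map F(λ, μ, ν) = (λ² + 2λν − 2μ², λν + 2ν², −μ²) of ℝ³. -/
import Mathlib

/-- The identification `Fin (2^n) ⊕ Fin (2^n) ≃ Fin (2^(n+1))` used for the block
recursions. -/
def sumEquiv (n : ℕ) : Fin (2 ^ n) ⊕ Fin (2 ^ n) ≃ Fin (2 ^ (n + 1)) :=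
  finSumFinEquiv.trans (finCongr (by rw [pow_succ]; omega))

-- The permutation matrices of the generators `a`, `b` of the iterated monodromy group
-- of `z² - 1` on the `2ⁿ` vertices of the `n`-th level of the binary rooted tree:
-- `A₀ = B₀ = (1)`, `A_{n+1} = [[0, B_n],[I, 0]]`, `B_{n+1} = [[A_n, 0],[0, I]]`.
mutual
def Amat : (n : ℕ) → Matrix (Fin (2 ^ n)) (Fin (2 ^ n)) ℝ
  | 0 => 1
  | n + 1 => Matrix.reindex (sumEquiv n) (sumEquiv n) (Matrix.fromBlocks 0 (Bmat n) 1 0)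

def Bmat : (n : ℕ) → Matrix (Fin (2 ^ n)) (Fin (2 ^ n)) ℝ
  | 0 => 1
  | n + 1 => Matrix.reindex (sumEquiv n) (sumEquiv n) (Matrix.fromBlocks (Amat n) 0 0 1)
end

/-- `Q_n(λ, μ, ν) = det(λ·I + μ·(A_n + A_n⁻¹) + ν·(B_n + B_n⁻¹))`. -/
noncomputable def Q (n : ℕ) (lam mu nu : ℝ) : ℝ :=
  (lam • (1 : Matrix (Fin (2 ^ n)) (Fin (2 ^ n)) ℝ) + mu • (Amat n + (Amat n)⁻¹)
    + nu • (Bmat n + (Bmat n)⁻¹)).det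

open Matrix in
lemma AB_transpose : ∀ n, Amat n * (Amat n)ᵀ = 1 ∧ Bmat n * (Bmat n)ᵀ = 1
  | 0 => by constructor <;> simp [Amat, Bmat]
  | n + 1 => by
    obtain ⟨hA, hB⟩ := AB_transpose n
    constructor
    · show Amat (n + 1) * (Amat (n + 1))ᵀ = 1
      rw [Amat]
      simp only [Matrix.reindex_apply, Matrix.transpose_submatrix,
        Matrix.fromBlocks_transpose, Matrix.submatrix_mul_equiv,
        Matrix.fromBlocks_multiply]
      simp [hB, Matrix.fromBlocks_one]
    · show Bmat (n + 1) * (Bmat (n + 1))ᵀ = 1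
      rw [Bmat]
      simp only [Matrix.reindex_apply, Matrix.transpose_submatrix,
        Matrix.fromBlocks_transpose, Matrix.submatrix_mul_equiv,
        Matrix.fromBlocks_multiply]
      simp [hA, Matrix.fromBlocks_one]

open Matrix in
lemma Ainv (n : ℕ) : (Amat n)⁻¹ = (Amat n)ᵀ :=
  Matrix.inv_eq_right_inv (AB_transpose n).1

open Matrix in
lemma Binv (n : ℕ) : (Bmat n)⁻¹ = (Bmat n)ᵀ :=
  Matrix.inv_eq_right_inv (AB_transpose n).2

open Matrix in
lemma Q_key (n : ℕ) (lam mu nu : ℝ) (h : lam + 2 * nu ≠ 0) :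
    Q (n + 1) lam mu nu =
      Q n (lam ^ 2 + 2 * lam * nu - 2 * mu ^ 2) (lam * nu + 2 * nu ^ 2) (-mu ^ 2) := by
  set A := Amat n with hA
  set B := Bmat n with hBdef
  have hB : B * Bᵀ = 1 := (AB_transpose n).2
  -- block description of the level-(n+1) matrix
  have h1 : Q (n + 1) lam mu nu =
      (Matrix.fromBlocks (lam • 1 + nu • (A + Aᵀ)) (mu • (B + 1)) (mu • (1 + Bᵀ))
        ((lam + 2 * nu) • 1)).det := by
    unfold Q
    rw [Ainv, Binv, Amat, Bmat]
    simp only [Matrix.reindex_apply, Matrix.transpose_submatrix, Matrix.fromBlocks_transpose,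
      Matrix.transpose_zero, Matrix.transpose_one, ← hA, ← hBdef]
    rw [show (1 : Matrix (Fin (2 ^ (n + 1))) (Fin (2 ^ (n + 1))) ℝ)
        = (1 : Matrix (Fin (2 ^ n) ⊕ Fin (2 ^ n)) _ ℝ).submatrix (sumEquiv n).symm
            (sumEquiv n).symm from (Matrix.submatrix_one_equiv (sumEquiv n).symm).symm]
    rw [← Matrix.det_submatrix_equiv_self (sumEquiv n).symm
      (Matrix.fromBlocks (lam • 1 + nu • (A + Aᵀ)) (mu • (B + 1)) (mu • (1 + Bᵀ))
        ((lam + 2 * nu) • 1))]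
    show ((lam • 1 + mu • (Matrix.fromBlocks 0 B 1 0 + Matrix.fromBlocks 0 1 Bᵀ 0)
        + nu • (Matrix.fromBlocks A 0 0 1 + Matrix.fromBlocks Aᵀ 0 0 1)).submatrix
        (sumEquiv n).symm (sumEquiv n).symm).det = _
    congr 1
    rw [← Matrix.fromBlocks_one, Matrix.fromBlocks_add, Matrix.fromBlocks_add,
      Matrix.fromBlocks_smul, Matrix.fromBlocks_smul, Matrix.fromBlocks_smul,
      Matrix.fromBlocks_add, Matrix.fromBlocks_add]
    apply congrArg
      (fun M : Matrix (Fin (2 ^ n) ⊕ Fin (2 ^ n)) (Fin (2 ^ n) ⊕ Fin (2 ^ n)) ℝ =>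
        M.submatrix (sumEquiv n).symm (sumEquiv n).symm)
    rw [Matrix.fromBlocks_inj]
    refine ⟨by module, by module, by module, by module⟩
  rw [h1]
  have hone : ((lam + 2 * nu) • (1 : Matrix (Fin (2 ^ n)) (Fin (2 ^ n)) ℝ))
      * ((lam + 2 * nu)⁻¹ • 1) = 1 := by
    rw [smul_mul_smul_comm, mul_inv_cancel₀ h, one_mul, one_smul]
  haveI : Invertible ((lam + 2 * nu) • (1 : Matrix (Fin (2 ^ n)) (Fin (2 ^ n)) ℝ)) :=
    invertibleOfRightInverse _ _ hone
  have hinv : ⅟ ((lam + 2 * nu) • (1 : Matrix (Fin (2 ^ n)) (Fin (2 ^ n)) ℝ))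
      = (lam + 2 * nu)⁻¹ • 1 := invOf_eq_right_inv hone
  rw [Matrix.det_fromBlocks₂₂, hinv]
  have hexp : (B + 1) * (1 + Bᵀ) = B + Bᵀ + (2 : ℝ) • 1 := by
    rw [add_mul, mul_add, mul_add, hB]
    simp [two_smul]
    abel
  have hprod : (mu • (B + 1)) * ((lam + 2 * nu)⁻¹ • (1 : Matrix (Fin (2 ^ n)) (Fin (2 ^ n)) ℝ))
      * (mu • (1 + Bᵀ))
      = (mu * (lam + 2 * nu)⁻¹ * mu) • (B + Bᵀ + (2 : ℝ) • 1) := by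
    rw [← hexp]
    simp only [Matrix.smul_mul, Matrix.mul_smul, Matrix.mul_one, smul_smul]
    module
  have hE : (lam ^ 2 + 2 * lam * nu - 2 * mu ^ 2) •
        (1 : Matrix (Fin (2 ^ n)) (Fin (2 ^ n)) ℝ)
        + (lam * nu + 2 * nu ^ 2) • (A + Aᵀ) + (-mu ^ 2) • (B + Bᵀ)
      = (lam + 2 * nu) • (lam • 1 + nu • (A + Aᵀ)
          - (mu • (B + 1)) * ((lam + 2 * nu)⁻¹ • 1) * (mu • (1 + Bᵀ))) := by
    rw [hprod]
    match_scalars <;> field_simp <;> ring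
  unfold Q
  rw [← hA, ← hBdef, Ainv, Binv, ← hA, ← hBdef, hE, Matrix.det_smul, Matrix.det_smul,
    Matrix.det_one, mul_one]

/-- the renormalization identity: for `n ≥ 1`,
`Q_{n+1}(λ,μ,ν) = Q_n(λ² + 2λν − 2μ², λν + 2ν², −μ²)`, i.e. `Q_{n+1} = Q_n ∘ F`. -/
theorem Q_renormalization (n : ℕ) (hn : 1 ≤ n) (lam mu nu : ℝ) :
    Q (n + 1) lam mu nu =
      Q n (lam ^ 2 + 2 * lam * nu - 2 * mu ^ 2) (lam * nu + 2 * nu ^ 2) (-mu ^ 2) := by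
  have hf : Continuous fun l : ℝ => Q (n + 1) l mu nu := by
    unfold Q
    exact Continuous.matrix_det
      (((continuous_id.smul continuous_const).add continuous_const).add continuous_const)
  have hg : Continuous fun l : ℝ =>
      Q n (l ^ 2 + 2 * l * nu - 2 * mu ^ 2) (l * nu + 2 * nu ^ 2) (-mu ^ 2) := by
    unfold Q
    apply Continuous.matrix_det
    apply Continuous.add
    apply Continuous.add
    · exact (by fun_prop : Continuous fun l : ℝ => l ^ 2 + 2 * l * nu - 2 * mu ^ 2).smul
        continuous_const
    · exact (by fun_prop : Continuous fun l : ℝ => l * nu + 2 * nu ^ 2).smul continuous_const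
    · exact continuous_const
  have heq : Set.EqOn (fun l : ℝ => Q (n + 1) l mu nu)
      (fun l : ℝ => Q n (l ^ 2 + 2 * l * nu - 2 * mu ^ 2) (l * nu + 2 * nu ^ 2) (-mu ^ 2))
      ({-(2 * nu)}ᶜ) := by
    intro l hl
    exact Q_key n l mu nu (fun h0 => hl (by simp only [Set.mem_singleton_iff]; linarith))
  have := Continuous.ext_on (dense_compl_singleton (-(2 * nu))) hf hg heq
  exact congrFun this lam
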